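/- arXiv:1907.12034 — 5 statements merged into one kernel-verified Lean document; each statement's English description precedes it below -/
import Mathlib

section
/- Let σ ≥ 1 and let S be a finite nonempty suffix-closed set of words over the alphabet Fin σ with |S| = n. Let F be the factorial closure of S. Then the number of minimal absent words of F is at most 2·n·σ. -/
/-- A set of words is suffix-closed if it contains every suffix of each of its members. -/
def SuffixClosed {α : Type*} (S : Set (List α)) : Prop :=
  ∀ w ∈ S, ∀ u : List α, u <:+ w → u ∈ S

/-- The factorial closure of a set of words: all factors (contiguous sublists) of its members. -/
def FactClosure {α : Type*} (S : Set (List α)) : Set (List α) :=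
  {u | ∃ w ∈ S, u <:+: w}

/-- The set of minimal absent words of a factor-closed language `L`:
words of length at least 2 that are not in `L` but whose tail and dropLast are in `L`. -/
def MAW {α : Type*} (L : Set (List α)) : Set (List α) :=
  {v | 2 ≤ v.length ∧ v ∉ L ∧ v.tail ∈ L ∧ v.dropLast ∈ L}

/-!
Every factor of a suffix-closed set `S` is a prefix of a word of `S`. So for a minimal absent
word `a :: t` of `F = FactClosure S` we may choose `x ∈ S` with `t <+: x`, and send `a :: t` to
`(a, x)`. This is injective: two minimal absent words `a :: t`, `a :: t'` sent to the same pair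
have comparable tails, and if `t` were a proper prefix of `t'` then `a :: t` would be a prefix of
`(a :: t').dropLast ∈ F`, contradicting `a :: t ∉ F`. Hence there are at most `σ * n` of them.
-/

variable {α : Type*}

theorem FactClosure.mem_of_isInfix {S : Set (List α)} {u v : List α}
    (hv : v ∈ FactClosure S) (huv : u <:+: v) : u ∈ FactClosure S := by
  obtain ⟨w, hw, hvw⟩ := hv
  exact ⟨w, hw, huv.trans hvw⟩

theorem SuffixClosed.exists_isPrefix_of_mem_factClosure {S : Set (List α)} (hS : SuffixClosed S)
    {u : List α} (hu : u ∈ FactClosure S) : ∃ x ∈ S, u <+: x := by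
  obtain ⟨w, hw, p, q, rfl⟩ := hu
  exact ⟨u ++ q, hS _ hw _ ⟨p, (List.append_assoc _ _ _).symm⟩, q, rfl⟩

theorem eq_of_isPrefix_of_cons_notMem {L : Set (List α)}
    (hL : ∀ u v : List α, u <+: v → v ∈ L → u ∈ L) {a : α} {t₁ t₂ : List α}
    (h₁ : a :: t₁ ∉ L) (h₂ : (a :: t₂).dropLast ∈ L) (h : t₁ <+: t₂) : t₁ = t₂ := by
  by_contra hne
  have hlt : t₁.length < t₂.length := lt_of_le_of_ne h.length_le (mt h.eq_of_length hne)
  have ht₂ : t₂ ≠ [] := by rintro rfl; simp at hlt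
  have hdrop : t₁ <+: t₂.dropLast :=
    List.prefix_of_prefix_length_le h (List.dropLast_prefix _) (by simp; omega)
  rw [List.dropLast_cons_of_ne_nil ht₂] at h₂
  exact h₁ (hL _ _ (List.cons_prefix_cons.mpr ⟨rfl, hdrop⟩) h₂)

theorem maw_subset_range_cons (L : Set (List α)) :
    MAW L ⊆ Set.range (Function.uncurry (List.cons : α → List α → List α)) := by
  rintro (_ | ⟨a, t⟩) ⟨hlen, -⟩
  · simp at hlen
  · exact ⟨(a, t), rfl⟩

theorem SuffixClosed.maw_factClosure_finite_and_ncard_le [Finite α] {S : Set (List α)}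
    (hS : SuffixClosed S) (hfin : S.Finite) :
    (MAW (FactClosure S)).Finite ∧ (MAW (FactClosure S)).ncard ≤ Nat.card α * S.ncard := by
  set F := FactClosure S
  choose! g hgS hg using fun t (ht : t ∈ F) ↦ hS.exists_isPrefix_of_mem_factClosure ht
  have hF : ∀ u v : List α, u <+: v → v ∈ F → u ∈ F := fun u v huv hv ↦
    FactClosure.mem_of_isInfix hv huv.isInfix
  set P := Function.uncurry List.cons ⁻¹' MAW F
  set f : α × List α → α × List α := fun p ↦ (p.1, g p.2)
  have hmaps : Set.MapsTo f P (Set.univ ×ˢ S) := fun p hp ↦ ⟨trivial, hgS _ hp.2.2.1⟩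
  have hinj : Set.InjOn f P := by
    rintro ⟨a, t₁⟩ h₁ ⟨b, t₂⟩ h₂ hf
    obtain ⟨rfl, hgt⟩ : a = b ∧ g t₁ = g t₂ := Prod.mk.inj hf
    have hpre₁ : t₁ <+: g t₂ := hgt ▸ hg t₁ h₁.2.2.1
    rcases List.prefix_or_prefix_of_prefix hpre₁ (hg t₂ h₂.2.2.1) with h | h
    · exact congrArg (a, ·) (eq_of_isPrefix_of_cons_notMem (t₂ := t₂) hF h₁.2.1 h₂.2.2.2 h)
    · exact congrArg (a, ·) (eq_of_isPrefix_of_cons_notMem (t₂ := t₁) hF h₂.2.1 h₁.2.2.2 h).symm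
  have htarget : (Set.univ ×ˢ S : Set (α × List α)).Finite := Set.finite_univ.prod hfin
  have hsub := maw_subset_range_cons F
  constructor
  · rw [← Set.image_preimage_eq_of_subset hsub]
    exact (htarget.of_injOn hmaps hinj).image _
  · rw [← Set.ncard_preimage_of_injective_subset_range
      (fun p q h ↦ Prod.ext (List.cons.inj h).1 (List.cons.inj h).2) hsub]
    calc P.ncard ≤ (Set.univ ×ˢ S).ncard := Set.ncard_le_ncard_of_injOn f hmaps hinj htarget
      _ = Nat.card α * S.ncard := by rw [Set.ncard_prod, Set.ncard_univ]

theorem maw_rooted_tree_bound_general (σ n : ℕ)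
    (S : Set (List (Fin σ))) (hfin : S.Finite)
    (hsc : SuffixClosed S) (hcard : S.ncard = n) :
    (MAW (FactClosure S)).Finite ∧ (MAW (FactClosure S)).ncard ≤ 2 * n * σ := by
  obtain ⟨hfinite, hle⟩ := hsc.maw_factClosure_finite_and_ncard_le hfin
  rw [Nat.card_fin, hcard] at hle
  exact ⟨hfinite, hle.trans (by nlinarith)⟩

/-- The number of minimal absent words of the factorial closure of a finite nonempty
suffix-closed set of `n` words over an alphabet of size `σ ≥ 1` is at most `2·n·σ`. -/
theorem maw_rooted_tree_bound (σ n : ℕ) (hσ : 1 ≤ σ)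
    (S : Set (List (Fin σ))) (hfin : S.Finite) (hne : S.Nonempty)
    (hsc : SuffixClosed S) (hcard : S.ncard = n) :
    (MAW (FactClosure S)).Finite ∧ (MAW (FactClosure S)).ncard ≤ 2 * n * σ :=
  maw_rooted_tree_bound_general σ n S hfin hsc hcard
end

section
/- Let S be a suffix-closed set of words over the alphabet Fin σ and let F be the factorial closure of S. If a word of the form a :: u ++ [b] (with a, b ∈ Fin σ) is a minimal absent word of F, then either u ∈ S, or there exists a letter b' ≠ b such that u ++ [b'] ∈ F. -/
/-!
In a suffix-closed set every factor is a prefix of a member. Extend `a :: u` to a member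
`a :: u ++ t` of `S`: if `t` is empty, `u ∈ S` as a suffix; otherwise the first letter of `t`
cannot be `b`, since `a :: u ++ [b]` is absent, and it extends `u` to a factor.
-/

theorem mem_factClosure_of_infix {α : Type*} {S : Set (List α)} {u w : List α}
    (hw : w ∈ S) (huw : u <:+: w) : u ∈ FactClosure S :=
  ⟨w, hw, huw⟩

theorem SuffixClosed.mem_factClosure_iff {α : Type*} {S : Set (List α)} (hS : SuffixClosed S)
    {u : List α} : u ∈ FactClosure S ↔ ∃ t, u ++ t ∈ S := by
  constructor
  · rintro ⟨w, hw, s, t, rfl⟩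
    exact ⟨t, hS _ hw _ ⟨s, by simp⟩⟩
  · rintro ⟨t, ht⟩
    exact mem_factClosure_of_infix ht (List.prefix_append u t).isInfix

/-- If `a :: u ++ [b]` is a minimal absent word of the factorial closure of a suffix-closed
set `S`, then either `u ∈ S`, or `u ++ [b']` is in the factorial closure for some letter
`b' ≠ b` (i.e., `u` corresponds to an explicit node of the suffix tree). -/
theorem maw_explicit_node (σ : ℕ) (S : Set (List (Fin σ))) (hsc : SuffixClosed S)
    (a b : Fin σ) (u : List (Fin σ))
    (h : a :: (u ++ [b]) ∈ MAW (FactClosure S)) :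
    u ∈ S ∨ ∃ b' : Fin σ, b' ≠ b ∧ u ++ [b'] ∈ FactClosure S := by
  obtain ⟨-, habsent, -, hdrop⟩ := h
  have hdrop_eq : (a :: (u ++ [b])).dropLast = a :: u := by
    rw [← List.cons_append, List.dropLast_concat]
  rw [hdrop_eq, hsc.mem_factClosure_iff] at hdrop
  obtain ⟨t, ht⟩ := hdrop
  rcases t with _ | ⟨b', t⟩
  · rw [List.append_nil] at ht
    exact Or.inl (hsc _ ht u (List.suffix_cons a u))
  · have hb' : b' ≠ b := by
      rintro rfl
      exact habsent (hsc.mem_factClosure_iff.mpr ⟨t, by simpa using ht⟩)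
    exact Or.inr ⟨b', hb', mem_factClosure_of_infix ht ⟨[a], t, by simp⟩⟩
end

section
/- Let σ ≥ 1, k ≥ 1, and ℓ ≥ 1. Work over the alphabet Fin (σ+1), where the letter σ (the last element) plays the role of the end-marker $ and the letters 0,…,σ−1 are the content letters. For a word s of length k over the content letters, define w_s = [$] ++ (concatenation over all content letters c, in order, of (c :: s ++ [$]) ++ (s ++ [c, $])). Let s_1, …, s_ℓ be words of length k over the content letters and let w = w_{s_1} ++ w_{s_2} ++ … ++ w_{s_ℓ}. Then for every pair of content letters a, b and every i with 1 ≤ i ≤ ℓ, the word a :: s_i ++ [b] is a minimal absent word of w. -/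
/-- The set of factors of a word `w`. -/
def Factors {α : Type*} (w : List α) : Set (List α) := {u | u <:+: w}

/-- For a word `s` over the content letters of `Fin (σ+1)` (the letter `Fin.last σ` playing
the role of the end-marker `$`), the word
`w_s = $ ++ (concatenation over content letters c of (c s $) ++ (s c $))`. -/
def wordOf (σ : ℕ) (s : List (Fin (σ + 1))) : List (Fin (σ + 1)) :=
  [Fin.last σ] ++
    (List.finRange σ).flatMap (fun c =>
      ((c.castSucc : Fin (σ + 1)) :: (s ++ [Fin.last σ])) ++ (s ++ [c.castSucc, Fin.last σ]))

/-!
Every `w_{s_j}` is the concatenation of the blocks `t $` with `t` ranging over `[]`, `c s_j` and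
`s_j c` for the content letters `c`. Both `a s_i` and `s_i b` are such blocks, hence factors of `w`.
A factor of `w` avoiding `$` lies inside a single block, so it has length at most `k + 1`; the word
`a s_i b` avoids `$` and has length `k + 2`, so it is absent.
-/

namespace List

variable {α : Type*}

theorem IsInfix.of_append_singleton_of_not_mem {u t : List α} {d : α} (h : u <:+: t ++ [d])
    (hd : d ∉ u) : u <:+: t := by
  rcases infix_concat_iff.mp h with h | h
  · rcases suffix_concat_iff.mp h with rfl | ⟨t', rfl, -⟩
    · exact nil_infix
    · simp at hd
  · exact h

theorem infix_flatMap_append_singleton_of_mem {L : List (List α)} {t : List α} (d : α)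
    (ht : t ∈ L) : t <:+: L.flatMap (· ++ [d]) :=
  infix_append_left.trans (infix_of_mem_flatten (mem_map_of_mem ht))

theorem IsInfix.exists_infix_of_flatMap_append_singleton {L : List (List α)} {u : List α} {d : α}
    (h : u <:+: L.flatMap (· ++ [d])) (hu : u ≠ []) (hd : d ∉ u) : ∃ t ∈ L, u <:+: t := by
  induction L with
  | nil => exact absurd (infix_nil.mp h) hu
  | cons t L ih =>
    rw [flatMap_cons] at h
    rcases infix_append_iff.mp h with h | h | ⟨l₁, l₂, rfl, h₁, h₂⟩
    · exact ⟨t, mem_cons_self, h.of_append_singleton_of_not_mem hd⟩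
    · obtain ⟨t', ht', h'⟩ := ih h
      exact ⟨t', mem_cons_of_mem t ht', h'⟩
    · rcases suffix_concat_iff.mp h₁ with rfl | ⟨t', rfl, -⟩
      · obtain ⟨t', ht', h'⟩ := ih h₂.isInfix
        exact ⟨t', mem_cons_of_mem t ht', h'⟩
      · simp at hd

end List

def wordBlocks (σ : ℕ) (s : List (Fin (σ + 1))) : List (List (Fin (σ + 1))) :=
  [] :: (List.finRange σ).flatMap fun c => [c.castSucc :: s, s ++ [c.castSucc]]

theorem wordOf_eq_flatMap_wordBlocks (σ : ℕ) (s : List (Fin (σ + 1))) :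
    wordOf σ s = (wordBlocks σ s).flatMap (· ++ [Fin.last σ]) := by
  simp [wordOf, wordBlocks, List.flatMap_assoc]

section wordBlocks

variable {σ : ℕ} {s : List (Fin (σ + 1))}

theorem length_le_of_mem_wordBlocks {t : List (Fin (σ + 1))} (ht : t ∈ wordBlocks σ s) :
    t.length ≤ s.length + 1 := by
  simp only [wordBlocks, List.mem_cons, List.mem_flatMap, List.mem_finRange, true_and,
    List.not_mem_nil, or_false] at ht
  rcases ht with rfl | ⟨c, rfl | rfl⟩ <;> simp

theorem cons_mem_wordBlocks {c : Fin (σ + 1)} (hc : c.val < σ) : c :: s ∈ wordBlocks σ s := by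
  simp only [wordBlocks, List.mem_cons, List.mem_flatMap, List.mem_finRange, true_and,
    List.not_mem_nil, or_false]
  exact Or.inr ⟨⟨c, hc⟩, Or.inl rfl⟩

theorem append_singleton_mem_wordBlocks {c : Fin (σ + 1)} (hc : c.val < σ) :
    s ++ [c] ∈ wordBlocks σ s := by
  simp only [wordBlocks, List.mem_cons, List.mem_flatMap, List.mem_finRange, true_and,
    List.not_mem_nil, or_false]
  exact Or.inr ⟨⟨c, hc⟩, Or.inr rfl⟩

end wordBlocks

theorem maw_of_concatenation_general (σ k ℓ : ℕ)
    (s : Fin ℓ → List (Fin (σ + 1)))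
    (hlen : ∀ i : Fin ℓ, (s i).length = k)
    (hcontent : ∀ i : Fin ℓ, ∀ x ∈ s i, x.val < σ) :
    ∀ (a b : Fin (σ + 1)), a.val < σ → b.val < σ → ∀ i : Fin ℓ,
      (a :: (s i ++ [b])) ∈
        MAW (Factors ((List.finRange ℓ).flatMap (fun i => wordOf σ (s i)))) := by
  intro a b ha hb i
  set blocks := (List.finRange ℓ).flatMap fun j => wordBlocks σ (s j)
  have hw : (List.finRange ℓ).flatMap (fun j => wordOf σ (s j)) =
      blocks.flatMap (· ++ [Fin.last σ]) := by
    simp only [blocks, wordOf_eq_flatMap_wordBlocks, List.flatMap_assoc]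
  have mem_blocks {t} (ht : t ∈ wordBlocks σ (s i)) : t ∈ blocks :=
    List.mem_flatMap.mpr ⟨i, List.mem_finRange i, ht⟩
  simp only [MAW, Factors, Set.mem_ofPred_eq, hw]
  refine ⟨by simp, fun hfactor => ?_, ?_, ?_⟩
  · have hlast : Fin.last σ ∉ a :: (s i ++ [b]) := by
      intro h
      rcases List.mem_cons.mp h with h | h
      · exact ha.ne (congrArg Fin.val h).symm
      rcases List.mem_append.mp h with h | h
      · exact (hcontent i _ h).ne rfl
      · exact hb.ne (congrArg Fin.val (List.mem_singleton.mp h)).symm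
    obtain ⟨t, ht, hinfix⟩ := hfactor.exists_infix_of_flatMap_append_singleton (by simp) hlast
    obtain ⟨j, -, htj⟩ := List.mem_flatMap.mp ht
    have := hinfix.length_le.trans (length_le_of_mem_wordBlocks htj)
    simp [hlen] at this
  · exact List.infix_flatMap_append_singleton_of_mem _
      (mem_blocks (append_singleton_mem_wordBlocks hb))
  · rw [← List.cons_append, List.dropLast_concat]
    exact List.infix_flatMap_append_singleton_of_mem _ (mem_blocks (cons_mem_wordBlocks ha))

/-- If `s 1, …, s ℓ` are words of length `k` over the content letters and
`w = w_{s 1} ++ … ++ w_{s ℓ}`, then for all content letters `a, b` and every `i`,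
the word `a :: s i ++ [b]` is a minimal absent word of `w`. -/
theorem maw_of_concatenation (σ k ℓ : ℕ) (hσ : 1 ≤ σ) (hk : 1 ≤ k) (hℓ : 1 ≤ ℓ)
    (s : Fin ℓ → List (Fin (σ + 1)))
    (hlen : ∀ i : Fin ℓ, (s i).length = k)
    (hcontent : ∀ i : Fin ℓ, ∀ x ∈ s i, x.val < σ) :
    ∀ (a b : Fin (σ + 1)), a.val < σ → b.val < σ → ∀ i : Fin ℓ,
      (a :: (s i ++ [b])) ∈
        MAW (Factors ((List.finRange ℓ).flatMap (fun i => wordOf σ (s i)))) :=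
  maw_of_concatenation_general σ k ℓ s hlen hcontent
end

section
/- For every σ ≥ 1, k ≥ 1, and ℓ with 1 ≤ ℓ ≤ σ^k, there exists a word w over the alphabet Fin (σ+1) of length exactly ℓ·(2σ(k+2)+1) such that w has at least σ²·ℓ minimal absent words, all of length exactly k+2. -/
/-!
Take a separator letter `#` and words `x₁, …, x_ℓ` of length `k` avoiding it (there are `σ^k` of
them over the other `σ` letters). The word `∏ᵢ # (∏ₐ a xᵢ #) (∏_b xᵢ b #)` is cut by `#` into
pieces of length at most `k + 2`, so every factor of length `k + 2` contains `#`. Hence each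
`a xᵢ b` is absent, while `a xᵢ` and `xᵢ b` occur: these are `σ²ℓ` distinct minimal absent words.
-/

variable {α : Type*}

theorem finite_factors (w : List α) : (Factors w).Finite :=
  w.sublists.finite_toSet.subset fun _ hu => List.mem_sublists.2 hu.sublist

theorem finite_maw_factors (w : List α) : (MAW (Factors w)).Finite := by
  refine ((finite_factors w).image2 (fun u a => u ++ [a]) w.finite_toSet).subset ?_
  rintro v ⟨hlen, -, htail, hdrop⟩
  have hv : v ≠ [] := List.ne_nil_of_length_pos (by omega)
  have htail_ne : v.tail ≠ [] := List.ne_nil_of_length_pos (by rw [List.length_tail]; omega)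
  refine ⟨v.dropLast, hdrop, v.getLast hv, ?_, List.dropLast_append_getLast hv⟩
  rw [← List.getLast_tail htail_ne]
  exact htail.subset (List.getLast_mem htail_ne)

namespace List

theorem mem_of_isSuffix_of_getLast?_eq {s : α} {u v : List α} (hu : u.getLast? = some s)
    (hvu : v <:+ u) (hv : v ≠ []) : s ∈ v := by
  apply mem_of_getLast?
  rw [getLast?_eq_some_getLast hv, hvu.getLast hv, ← getLast?_eq_some_getLast, hu]

theorem infix_or_infix_of_infix_append {s : α} {u w v : List α} (hu : u.getLast? = some s)
    (hs : s ∉ v) (h : v <:+: u ++ w) : v <:+: u ∨ v <:+: w := by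
  rcases infix_append_iff_ne_nil.1 h with h | h | ⟨v₁, v₂, hv₁, -, rfl, hv₁u, -⟩
  · exact Or.inl h
  · exact Or.inr h
  · exact absurd (mem_append_left v₂ (mem_of_isSuffix_of_getLast?_eq hu hv₁u hv₁)) hs

theorem exists_infix_of_infix_flatten {s : α} {L : List (List α)} {v : List α}
    (hL : ∀ u ∈ L, u.getLast? = some s) (hs : s ∉ v) (hv : v ≠ []) (h : v <:+: L.flatten) :
    ∃ u ∈ L, v <:+: u := by
  induction L with
  | nil => exact absurd (eq_nil_of_infix_nil h) hv
  | cons u L ih =>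
    rw [flatten_cons] at h
    rcases infix_or_infix_of_infix_append (hL u mem_cons_self) hs h with h | h
    · exact ⟨u, mem_cons_self, h⟩
    · obtain ⟨u', hu', h⟩ := ih (fun u hu => hL u (mem_cons_of_mem _ hu)) h
      exact ⟨u', mem_cons_of_mem _ hu', h⟩

end List

section Construction

variable (s : α) (A : List α)

def mawBlock (x : List α) : List (List α) :=
  [s] :: (A.map fun a => a :: x ++ [s]) ++ A.map fun b => x ++ [b, s]

def mawWord (X : List (List α)) : List α :=
  (X.flatMap (mawBlock s A)).flatten

variable {s A}

theorem getLast?_eq_of_mem_mawBlock {x u : List α} (hu : u ∈ mawBlock s A x) :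
    u.getLast? = some s := by
  simp only [mawBlock, List.mem_cons, List.mem_append, List.mem_map] at hu
  rcases hu with (rfl | ⟨a, -, rfl⟩) | ⟨b, -, rfl⟩ <;> simp [List.getLast?_cons]

theorem length_le_of_mem_mawBlock {x u : List α} (hu : u ∈ mawBlock s A x) :
    u.length ≤ x.length + 2 := by
  simp only [mawBlock, List.mem_cons, List.mem_append, List.mem_map] at hu
  rcases hu with (rfl | ⟨a, -, rfl⟩) | ⟨b, -, rfl⟩ <;> simp

theorem length_flatten_mawBlock (x : List α) :
    (mawBlock s A x).flatten.length = 2 * A.length * (x.length + 2) + 1 := by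
  simp only [mawBlock, List.flatten_cons, List.flatten_append, List.length_append,
    List.length_flatten, List.map_map, Function.comp_def, List.length_cons, List.map_const',
    List.sum_replicate, List.length_nil, smul_eq_mul]
  ring

theorem length_mawWord {X : List (List α)} {k : ℕ} (hX : ∀ x ∈ X, x.length = k) :
    (mawWord s A X).length = X.length * (2 * A.length * (k + 2) + 1) := by
  have hblock : ∀ x ∈ X, (List.length ∘ List.flatten ∘ mawBlock s A) x =
      2 * A.length * (k + 2) + 1 := fun x hx => by
    simp only [Function.comp_apply, length_flatten_mawBlock, hX x hx]
  rw [mawWord, List.flatMap_def, List.flatten_flatten, List.map_map, List.length_flatten,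
    List.map_map, List.map_congr_left hblock, List.map_const', List.sum_replicate, smul_eq_mul]

theorem infix_mawWord {X : List (List α)} {x u : List α} (hx : x ∈ X)
    (hu : u ∈ mawBlock s A x) : u <:+: mawWord s A X :=
  List.infix_of_mem_flatten (List.mem_flatMap.2 ⟨x, hx, hu⟩)

theorem cons_append_singleton_mem_maw {X : List (List α)} {k : ℕ} (hsA : s ∉ A)
    (hlen : ∀ x ∈ X, x.length = k) (hsX : ∀ x ∈ X, s ∉ x) {a b : α} {x : List α}
    (ha : a ∈ A) (hx : x ∈ X) (hb : b ∈ A) :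
    a :: x ++ [b] ∈ MAW (Factors (mawWord s A X)) := by
  refine ⟨by simp, fun hfac => ?_, ?_, ?_⟩
  -- An `s`-free factor of length `k + 2` would lie inside a single piece, hence equal it.
  · have hs : s ∉ a :: x ++ [b] := by
      have has : s ≠ a := fun h => hsA (h ▸ ha)
      have hbs : s ≠ b := fun h => hsA (h ▸ hb)
      simp [has, hbs, hsX x hx]
    have hpieces : ∀ u ∈ X.flatMap (mawBlock s A), u.getLast? = some s := fun u hu => by
      obtain ⟨x', -, hu⟩ := List.mem_flatMap.1 hu
      exact getLast?_eq_of_mem_mawBlock hu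
    obtain ⟨u, hu, hvu⟩ := List.exists_infix_of_infix_flatten hpieces hs (by simp) hfac
    obtain ⟨x', hx', hu⟩ := List.mem_flatMap.1 hu
    have hshort : u.length ≤ (a :: x ++ [b]).length := by
      simpa [hlen x hx, hlen x' hx'] using length_le_of_mem_mawBlock hu
    rw [hvu.eq_of_length_le hshort] at hs
    exact hs (List.mem_of_getLast? (getLast?_eq_of_mem_mawBlock hu))
  · have hmem : x ++ [b] ++ [s] ∈ mawBlock s A x := by simp [mawBlock, hb]
    exact (List.prefix_append _ _).isInfix.trans (infix_mawWord hx hmem)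
  · have hmem : a :: x ++ [s] ∈ mawBlock s A x := by simp [mawBlock, ha]
    rw [List.dropLast_concat]
    exact (List.prefix_append _ _).isInfix.trans (infix_mawWord hx hmem)

theorem le_ncard_maw_mawWord {X : List (List α)} {k : ℕ} (hA : A.Nodup) (hX : X.Nodup)
    (hsA : s ∉ A) (hlen : ∀ x ∈ X, x.length = k) (hsX : ∀ x ∈ X, s ∉ x) :
    A.length ^ 2 * X.length ≤
      {v | v ∈ MAW (Factors (mawWord s A X)) ∧ v.length = k + 2}.ncard := by
  classical
  let f : α × List α × α → List α := fun p => p.1 :: p.2.1 ++ [p.2.2]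
  have hf : Function.Injective f := by
    rintro ⟨a, x, b⟩ ⟨a', x', b'⟩ h
    simpa [f] using h
  calc A.length ^ 2 * X.length = ((A.toFinset ×ˢ X.toFinset ×ˢ A.toFinset).image f).card := by
        rw [Finset.card_image_of_injective _ hf, Finset.card_product, Finset.card_product,
          List.toFinset_card_of_nodup hA, List.toFinset_card_of_nodup hX]
        ring
    _ ≤ _ := by
        rw [← Set.ncard_coe_finset]
        refine Set.ncard_le_ncard ?_ ((finite_maw_factors _).subset fun v hv => hv.1)
        intro v hv
        simp only [Finset.coe_image, Finset.coe_product, List.coe_toFinset, Set.mem_image,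
          Set.mem_prod] at hv
        obtain ⟨⟨a, x, b⟩, ⟨ha, hx, hb⟩, rfl⟩ := hv
        exact ⟨cons_append_singleton_mem_maw hsA hlen hsX ha hx hb, by simp [f, hlen x hx]⟩

end Construction

theorem many_maws_of_fixed_length_general (σ k ℓ : ℕ) (hℓ' : ℓ ≤ σ ^ k) :
    ∃ w : List (Fin (σ + 1)),
      w.length = ℓ * (2 * σ * (k + 2) + 1) ∧
      σ ^ 2 * ℓ ≤ {v | v ∈ MAW (Factors w) ∧ v.length = k + 2}.ncard := by
  let A : List (Fin (σ + 1)) := List.ofFn Fin.castSucc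
  -- the base-`σ` expansions of `0, …, ℓ - 1`, written with the letters below `Fin.last σ`
  let X : List (List (Fin (σ + 1))) := List.ofFn fun i : Fin ℓ =>
    List.ofFn (Fin.castSucc ∘ finFunctionFinEquiv.symm (Fin.castLE hℓ' i))
  have hA : A.Nodup := List.nodup_ofFn.2 (Fin.castSucc_injective σ)
  have hX : X.Nodup := List.nodup_ofFn.2 <| List.ofFn_injective.comp <|
    (Fin.castSucc_injective σ).comp_left.comp <|
      finFunctionFinEquiv.symm.injective.comp (Fin.castLE_injective hℓ')
  have hsA : Fin.last σ ∉ A := by simp [A]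
  have hlen : ∀ x ∈ X, x.length = k := by simp [X]
  have hsX : ∀ x ∈ X, Fin.last σ ∉ x := by simp [X]
  refine ⟨mawWord (Fin.last σ) A X, ?_, ?_⟩
  · simp [length_mawWord hlen, A, X]
  · simpa [A, X] using le_ncard_maw_mawWord hA hX hsA hlen hsX

/-- For every `σ ≥ 1`, `k ≥ 1` and `1 ≤ ℓ ≤ σ^k`, there is a word `w` over `Fin (σ+1)` of
length exactly `ℓ·(2σ(k+2)+1)` having at least `σ²·ℓ` minimal absent words, all of
length exactly `k+2`. -/
theorem many_maws_of_fixed_length (σ k ℓ : ℕ) (hσ : 1 ≤ σ) (hk : 1 ≤ k)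
    (hℓ : 1 ≤ ℓ) (hℓ' : ℓ ≤ σ ^ k) :
    ∃ w : List (Fin (σ + 1)),
      w.length = ℓ * (2 * σ * (k + 2) + 1) ∧
      σ ^ 2 * ℓ ≤ {v | v ∈ MAW (Factors w) ∧ v.length = k + 2}.ncard :=
  many_maws_of_fixed_length_general σ k ℓ hℓ'
end

section
/- Let σ ≥ 1 and n ≥ 1, let G be a simple graph on Fin n with G.IsTree, and let f : G.edgeSet → Fin σ be an edge labeling. Let L(G,f) be the path language of (G,f). Then the set of minimal absent words of L(G,f) has cardinality at most n²·σ. -/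
/-- The path language of an edge-labeled graph: all words obtained as the sequences of
labels of the successive edges of walks that are paths (including trivial walks, which
contribute the empty word). -/
def pathLang {n σ : ℕ} (G : SimpleGraph (Fin n)) (f : G.edgeSet → Fin σ) :
    Set (List (Fin σ)) :=
  {l | ∃ (u v : Fin n) (p : G.Walk u v), p.IsPath ∧
    l = p.darts.map (fun d => f ⟨d.edge, d.edge_mem⟩)}

/-!
A minimal absent word `v` is determined by its proper prefix `v.dropLast`, which lies in the
language, and its last letter; so there are at most `|L| · σ` of them. In a tree a path is
determined by its two endpoints, so the path language has at most `n²` words.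
-/

section MinimalAbsentWords

variable {α : Type*}

theorem MAW_subset_image_append_singleton (L : Set (List α)) :
    MAW L ⊆ (fun w : List α × α => w.1 ++ [w.2]) '' (L ×ˢ Set.univ) := by
  rintro v ⟨hlen, -, -, hdrop⟩
  have hv : v ≠ [] := by rintro rfl; simp at hlen
  exact ⟨(v.dropLast, v.getLast hv), ⟨hdrop, Set.mem_univ _⟩, List.dropLast_append_getLast hv⟩

variable [Finite α] {L : Set (List α)}

theorem finite_MAW (hL : L.Finite) : (MAW L).Finite :=
  ((hL.prod Set.finite_univ).image _).subset (MAW_subset_image_append_singleton L)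

theorem ncard_MAW_le (hL : L.Finite) : (MAW L).ncard ≤ L.ncard * Nat.card α :=
  calc (MAW L).ncard
      ≤ ((fun w : List α × α => w.1 ++ [w.2]) '' (L ×ˢ Set.univ)).ncard :=
        Set.ncard_le_ncard (MAW_subset_image_append_singleton L)
          ((hL.prod Set.finite_univ).image _)
    _ ≤ (L ×ˢ (Set.univ : Set α)).ncard := Set.ncard_image_le (hL.prod Set.finite_univ)
    _ = L.ncard * Nat.card α := by rw [Set.ncard_prod, Set.ncard_univ]

end MinimalAbsentWords

section PathLanguage

variable {n σ : ℕ} {G : SimpleGraph (Fin n)}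

theorem pathLang_eq_range (f : G.edgeSet → Fin σ) :
    pathLang G f = Set.range fun q : Σ uv : Fin n × Fin n, G.Path uv.1 uv.2 =>
      q.2.1.darts.map fun d => f ⟨d.edge, d.edge_mem⟩ := by
  ext l
  constructor
  · rintro ⟨u, v, p, hp, rfl⟩
    exact ⟨⟨(u, v), ⟨p, hp⟩⟩, rfl⟩
  · rintro ⟨⟨⟨u, v⟩, p, hp⟩, rfl⟩
    exact ⟨u, v, p, hp, rfl⟩

theorem SimpleGraph.IsAcyclic.injective_fst_sigma_path (hG : G.IsAcyclic) :
    Function.Injective (Sigma.fst : (Σ uv : Fin n × Fin n, G.Path uv.1 uv.2) → Fin n × Fin n) :=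
  have := SimpleGraph.isAcyclic_iff_subsingleton_path.mp hG
  Sigma.fst_injective

theorem SimpleGraph.IsAcyclic.finite_pathLang (hG : G.IsAcyclic) (f : G.edgeSet → Fin σ) :
    (pathLang G f).Finite := by
  have := Finite.of_injective _ hG.injective_fst_sigma_path
  rw [pathLang_eq_range]
  exact Set.finite_range _

theorem SimpleGraph.IsAcyclic.ncard_pathLang_le (hG : G.IsAcyclic) (f : G.edgeSet → Fin σ) :
    (pathLang G f).ncard ≤ n ^ 2 := by
  have := Finite.of_injective _ hG.injective_fst_sigma_path
  calc (pathLang G f).ncard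
      ≤ Nat.card (Σ uv : Fin n × Fin n, G.Path uv.1 uv.2) := by
        rw [pathLang_eq_range, ← Nat.card_coe_set_eq]
        exact Finite.card_range_le _
    _ ≤ Nat.card (Fin n × Fin n) := Nat.card_le_card_of_injective _ hG.injective_fst_sigma_path
    _ = n ^ 2 := by simp [sq]

end PathLanguage

theorem maw_unrooted_tree_bound_general (σ n : ℕ)
    (G : SimpleGraph (Fin n)) (hG : G.IsTree) (f : G.edgeSet → Fin σ) :
    (MAW (pathLang G f)).Finite ∧ (MAW (pathLang G f)).ncard ≤ n ^ 2 * σ := by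
  have hL := hG.isAcyclic.finite_pathLang f
  refine ⟨finite_MAW hL, ?_⟩
  calc (MAW (pathLang G f)).ncard ≤ (pathLang G f).ncard * Nat.card (Fin σ) := ncard_MAW_le hL
    _ ≤ n ^ 2 * σ := by
      rw [Nat.card_fin]
      exact Nat.mul_le_mul_right σ (hG.isAcyclic.ncard_pathLang_le f)

/-- The set of minimal absent words of the path language of an edge-labeled unrooted tree
on `n` nodes over an alphabet of size `σ` has cardinality at most `n²·σ`. -/
theorem maw_unrooted_tree_bound (σ n : ℕ) (hσ : 1 ≤ σ) (hn : 1 ≤ n)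
    (G : SimpleGraph (Fin n)) (hG : G.IsTree) (f : G.edgeSet → Fin σ) :
    (MAW (pathLang G f)).Finite ∧ (MAW (pathLang G f)).ncard ≤ n ^ 2 * σ :=
  maw_unrooted_tree_bound_general σ n G hG f
end
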